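/- Let R be a ring, S a right coherent ring, E an R-S-bimodule that is fp-injective as a right S-module, and J an injective left R-module. Then the left S-module Hom_R(E,J) is flat. -/

import Mathlib

open CategoryTheory TensorProduct

universe u

set_option maxHeartbeats 1000000
noncomputable section

namespace NCT

variable (R : Type u) [Ring R]

/-- The subgroup of relations defining the balanced tensor product `M ⊗_R N`
of a right `R`-module `M` and a left `R`-module `N`. -/
def rel (M N : Type u) [AddCommGroup M] [Module Rᵐᵒᵖ M] [AddCommGroup N] [Module R N] :
    AddSubgroup (M ⊗[ℤ] N) :=
  AddSubgroup.closure {x | ∃ (r : R) (m : M) (n : N),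
    x = (MulOpposite.op r • m) ⊗ₜ[ℤ] n - m ⊗ₜ[ℤ] (r • n)}

/-- The balanced tensor product `M ⊗_R N` over a (possibly noncommutative) ring `R`. -/
def Tens (M N : Type u) [AddCommGroup M] [Module Rᵐᵒᵖ M] [AddCommGroup N] [Module R N] :
    Type u :=
  (M ⊗[ℤ] N) ⧸ rel R M N

instance (M N : Type u) [AddCommGroup M] [Module Rᵐᵒᵖ M] [AddCommGroup N] [Module R N] :
    AddCommGroup (Tens R M N) :=
  inferInstanceAs (AddCommGroup ((M ⊗[ℤ] N) ⧸ rel R M N))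

variable {R}

variable {M M' M'' N N' N'' : Type u}
  [AddCommGroup M] [Module Rᵐᵒᵖ M] [AddCommGroup M'] [Module Rᵐᵒᵖ M']
  [AddCommGroup M''] [Module Rᵐᵒᵖ M'']
  [AddCommGroup N] [Module R N] [AddCommGroup N'] [Module R N']
  [AddCommGroup N''] [Module R N'']

/-- The canonical projection. -/
def mk : M ⊗[ℤ] N →+ Tens R M N := QuotientAddGroup.mk' (rel R M N)

lemma mk_surjective : Function.Surjective (mk (R := R) (M := M) (N := N)) :=
  QuotientAddGroup.mk'_surjective _

private def intMap (f : M →ₗ[Rᵐᵒᵖ] M') (g : N →ₗ[R] N') : M ⊗[ℤ] N →ₗ[ℤ] M' ⊗[ℤ] N' :=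
  TensorProduct.map f.toAddMonoidHom.toIntLinearMap g.toAddMonoidHom.toIntLinearMap

private lemma intMap_id :
    intMap (LinearMap.id : M →ₗ[Rᵐᵒᵖ] M) (LinearMap.id : N →ₗ[R] N) = LinearMap.id :=
  TensorProduct.ext' fun _ _ => rfl

private lemma intMap_comp (f' : M' →ₗ[Rᵐᵒᵖ] M'') (f : M →ₗ[Rᵐᵒᵖ] M')
    (g' : N' →ₗ[R] N'') (g : N →ₗ[R] N') :
    intMap (f'.comp f) (g'.comp g) = (intMap f' g').comp (intMap f g) :=
  TensorProduct.ext' fun _ _ => rfl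

private lemma rel_le (f : M →ₗ[Rᵐᵒᵖ] M') (g : N →ₗ[R] N') :
    rel R M N ≤ (rel R M' N').comap (intMap f g).toAddMonoidHom := by
  rw [rel, AddSubgroup.closure_le]
  rintro x ⟨r, m, n, rfl⟩
  simp only [SetLike.mem_coe, AddSubgroup.mem_comap, LinearMap.toAddMonoidHom_coe, map_sub]
  apply AddSubgroup.subset_closure
  refine ⟨r, f m, g n, ?_⟩
  show (f (MulOpposite.op r • m)) ⊗ₜ[ℤ] g n - f m ⊗ₜ[ℤ] g (r • n) = _
  rw [f.map_smul, g.map_smul]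

/-- Functoriality of the balanced tensor product. -/
def tmap (f : M →ₗ[Rᵐᵒᵖ] M') (g : N →ₗ[R] N') : Tens R M N →+ Tens R M' N' :=
  QuotientAddGroup.map _ _ (intMap f g).toAddMonoidHom (rel_le f g)

lemma tmap_mk (f : M →ₗ[Rᵐᵒᵖ] M') (g : N →ₗ[R] N') (x : M ⊗[ℤ] N) :
    tmap f g (mk x) = mk (intMap f g x) := rfl

lemma tmap_id_apply (x : Tens R M N) :
    tmap (LinearMap.id : M →ₗ[Rᵐᵒᵖ] M) (LinearMap.id : N →ₗ[R] N) x = x := by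
  obtain ⟨y, rfl⟩ := mk_surjective x
  rw [tmap_mk, intMap_id]
  rfl

lemma tmap_tmap (f' : M' →ₗ[Rᵐᵒᵖ] M'') (f : M →ₗ[Rᵐᵒᵖ] M')
    (g' : N' →ₗ[R] N'') (g : N →ₗ[R] N') (x : Tens R M N) :
    tmap f' g' (tmap f g x) = tmap (f'.comp f) (g'.comp g) x := by
  obtain ⟨y, rfl⟩ := mk_surjective x
  rw [tmap_mk, tmap_mk, tmap_mk, intMap_comp]
  rfl

lemma tmap_add_left (f₁ f₂ : M →ₗ[Rᵐᵒᵖ] M') (g : N →ₗ[R] N') :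
    tmap (f₁ + f₂) g = tmap f₁ g + tmap f₂ g := by
  ext x
  obtain ⟨y, rfl⟩ := mk_surjective x
  have h : intMap (f₁ + f₂) g = intMap f₁ g + intMap f₂ g := by
    apply TensorProduct.ext'
    intro m n
    show (f₁ m + f₂ m) ⊗ₜ[ℤ] g n = _
    rw [add_tmul]
    rfl
  simp only [AddMonoidHom.add_apply, tmap_mk, h, LinearMap.add_apply]
  rw [map_add]

lemma tmap_add_right (f : M →ₗ[Rᵐᵒᵖ] M') (g₁ g₂ : N →ₗ[R] N') :
    tmap f (g₁ + g₂) = tmap f g₁ + tmap f g₂ := by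
  ext x
  obtain ⟨y, rfl⟩ := mk_surjective x
  have h : intMap f (g₁ + g₂) = intMap f g₁ + intMap f g₂ := by
    apply TensorProduct.ext'
    intro m n
    show f m ⊗ₜ[ℤ] (g₁ n + g₂ n) = _
    rw [tmul_add]
    rfl
  simp only [AddMonoidHom.add_apply, tmap_mk, h, LinearMap.add_apply]
  rw [map_add]


lemma tmap_zero_left (g : N →ₗ[R] N') :
    tmap (0 : M →ₗ[Rᵐᵒᵖ] M') g = 0 := by
  ext x
  obtain ⟨y, rfl⟩ := mk_surjective x
  have h : intMap (0 : M →ₗ[Rᵐᵒᵖ] M') g = 0 := by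
    apply TensorProduct.ext'
    intro m n
    show (0 : M') ⊗ₜ[ℤ] g n = 0
    rw [zero_tmul]
  rw [tmap_mk, h]
  rfl

lemma tmap_zero_right (f : M →ₗ[Rᵐᵒᵖ] M') :
    tmap f (0 : N →ₗ[R] N') = 0 := by
  ext x
  obtain ⟨y, rfl⟩ := mk_surjective x
  have h : intMap f (0 : N →ₗ[R] N') = 0 := by
    apply TensorProduct.ext'
    intro m n
    show f m ⊗ₜ[ℤ] (0 : N') = 0
    rw [tmul_zero]
  rw [tmap_mk, h]
  rfl

variable (R)

/-- The balanced tensor product, as a bifunctor on module categories. -/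
def tensorBifunctor : ModuleCat.{u} Rᵐᵒᵖ ⥤ ModuleCat.{u} R ⥤ AddCommGrpCat.{u} where
  obj M :=
    { obj := fun N => AddCommGrpCat.of (Tens R M N)
      map := fun g => AddCommGrpCat.ofHom (tmap LinearMap.id g.hom)
      map_id := fun N => by
        ext x
        exact tmap_id_apply x
      map_comp := fun g g' => by
        ext x
        show tmap LinearMap.id (LinearMap.comp g'.hom g.hom) x
          = tmap LinearMap.id g'.hom (tmap LinearMap.id g.hom x)
        rw [tmap_tmap, LinearMap.id_comp] }
  map f :=
    { app := fun N => AddCommGrpCat.ofHom (tmap f.hom LinearMap.id)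
      naturality := fun N N' g => by
        ext x
        show tmap f.hom LinearMap.id (tmap LinearMap.id g.hom x)
          = tmap LinearMap.id g.hom (tmap f.hom LinearMap.id x)
        rw [tmap_tmap, tmap_tmap, LinearMap.id_comp, LinearMap.comp_id,
          LinearMap.id_comp, LinearMap.comp_id] }
  map_id := fun M => by
    ext N x
    exact tmap_id_apply x
  map_comp := fun f f' => by
    ext N x
    show tmap (LinearMap.comp f'.hom f.hom) LinearMap.id x
      = tmap f'.hom LinearMap.id (tmap f.hom LinearMap.id x)
    rw [tmap_tmap, LinearMap.id_comp]

instance (M : ModuleCat.{u} Rᵐᵒᵖ) : ((tensorBifunctor R).obj M).Additive where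
  map_add := by
    intro N N' g g'
    ext x
    show tmap LinearMap.id (g.hom + g'.hom) x = _
    rw [tmap_add_right]
    rfl

instance (N : ModuleCat.{u} R) : ((tensorBifunctor R).flip.obj N).Additive where
  map_add := by
    intro M M' f f'
    ext x
    show tmap (f.hom + f'.hom) LinearMap.id x = _
    rw [tmap_add_left]
    rfl


instance : (tensorBifunctor R).PreservesZeroMorphisms where
  map_zero := by
    intro M M'
    ext N x
    show tmap (0 : ↑M →ₗ[Rᵐᵒᵖ] ↑M') LinearMap.id x = 0
    rw [tmap_zero_left]
    rfl

/-- A right `R`-module `M` is flat if `M ⊗_R -` preserves injectivity. -/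
def FlatRight (M : Type u) [AddCommGroup M] [Module Rᵐᵒᵖ M] : Prop :=
  ∀ (N N' : Type u) [AddCommGroup N] [Module R N] [AddCommGroup N'] [Module R N']
    (g : N →ₗ[R] N'), Function.Injective g →
      Function.Injective (tmap (LinearMap.id : M →ₗ[Rᵐᵒᵖ] M) g)

/-- A left `R`-module `N` is flat if `- ⊗_R N` preserves injectivity. -/
def FlatLeft (N : Type u) [AddCommGroup N] [Module R N] : Prop :=
  ∀ (M M' : Type u) [AddCommGroup M] [Module Rᵐᵒᵖ M] [AddCommGroup M'] [Module Rᵐᵒᵖ M']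
    (f : M →ₗ[Rᵐᵒᵖ] M'), Function.Injective f →
      Function.Injective (tmap f (LinearMap.id : N →ₗ[R] N))

end NCT

open CategoryTheory Opposite

section

variable (R : Type u) [Ring R] (S : Type u) [Ring S]
variable (E : Type u) [AddCommGroup E] [Module R E] [Module Sᵐᵒᵖ E] [SMulCommClass R Sᵐᵒᵖ E]

/-- Right multiplication by `s ∈ S` on an `R`-`S`-bimodule `E`, as an `R`-linear map. -/
def rightMulLin (s : Sᵐᵒᵖ) : E →ₗ[R] E where
  toFun e := s • e
  map_add' := smul_add s
  map_smul' r e := (smul_comm r s e).symm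

variable (J : Type u) [AddCommGroup J] [Module R J]

/-- The left `S`-module structure on `Hom_R(E, J)` induced by the right `S`-module
structure on the `R`-`S`-bimodule `E`: `(s • f) e = f (e • s)`. -/
instance homLeftModule : Module S (E →ₗ[R] J) where
  smul s f := f.comp (rightMulLin R S E (MulOpposite.op s))
  one_smul f := by
    ext e
    show f ((MulOpposite.op (1 : S)) • e) = f e
    rw [MulOpposite.op_one, one_smul]
  mul_smul s t f := by
    ext e
    show f ((MulOpposite.op (s * t)) • e) = f (MulOpposite.op t • MulOpposite.op s • e)
    rw [MulOpposite.op_mul, mul_smul]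
  smul_zero s := by ext e; rfl
  smul_add s f g := by ext e; rfl
  add_smul s t f := by
    ext e
    show f ((MulOpposite.op (s + t)) • e) = f (MulOpposite.op s • e) + f (MulOpposite.op t • e)
    rw [← map_add, MulOpposite.op_add, add_smul]
  zero_smul f := by
    ext e
    show f ((MulOpposite.op (0 : S)) • e) = 0
    rw [MulOpposite.op_zero, zero_smul, map_zero]

end

/-- A module is finitely presentable if it is the cokernel of a morphism of finitely
generated free modules. -/
def IsFinitelyPresentableMod (A : Type u) [Ring A] (M : Type u) [AddCommGroup M]
    [Module A M] : Prop :=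
  ∃ (k l : ℕ) (f : (Fin k →₀ A) →ₗ[A] (Fin l →₀ A)),
    Nonempty (M ≃ₗ[A] ((Fin l →₀ A) ⧸ LinearMap.range f))

/-!
Flatness of `H = Hom_R(E, J)` is tested on finitely generated right ideals `I` of `S`: by Lambek's
criterion it suffices that the character module of `H` be injective, and by Baer's criterion and a
direct-limit argument that `I ⊗_S H → S ⊗_S H` be injective for every finitely generated `I`.
Such an `I` is finitely presented (coherence), and then, `J` being injective, the pairings
`a ⊗ f ↦ f (g a)` with `g : I → E` separate the points of `I ⊗_S H`. Since `Ext¹(S/I, E) = 0`,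
every `g` extends to `S → E`, so an element of the kernel of `I ⊗_S H → S ⊗_S H` is killed by all
these pairings.
-/

universe v

lemma Module.Injective.exists_comp_eq_of_ker_le {R : Type*} [Ring R] {A B : Type*}
    [AddCommGroup A] [Module R A] [AddCommGroup B] [Module R B]
    {J : Type v} [AddCommGroup J] [Module R J] [Small.{v} R] [Module.Injective R J]
    {α : A →ₗ[R] B} {β : A →ₗ[R] J} (h : LinearMap.ker α ≤ LinearMap.ker β) :
    ∃ γ : B →ₗ[R] J, γ ∘ₗ α = β := by
  have hα : Function.Injective ((LinearMap.ker α).liftQ α le_rfl) := by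
    rw [← LinearMap.ker_eq_bot]
    exact Submodule.ker_liftQ_eq_bot _ _ _ le_rfl
  obtain ⟨γ, hγ⟩ := Module.Injective.extension_property R J _ B _ hα ((LinearMap.ker α).liftQ β h)
  exact ⟨γ, LinearMap.ext fun a => LinearMap.congr_fun hγ (Submodule.Quotient.mk a)⟩

lemma CategoryTheory.ProjectiveResolution.exists_d_comp_eq_of_subsingleton_ext
    {C : Type*} [Category C] [Abelian C] [EnoughProjectives C]
    {X Y : C} (P : ProjectiveResolution X)
    (hXY : Subsingleton (((Ext ℤ C 1).obj (op X)).obj Y))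
    (g : P.complex.X 1 ⟶ Y) (hg : P.complex.d 2 1 ≫ g = 0) :
    ∃ h : P.complex.X 0 ⟶ Y, P.complex.d 1 0 ≫ h = g := by
  have : Subsingleton ((P.complex.linearYonedaObj ℤ Y).homology 1) :=
    ((forget _).mapIso (P.isoExt 1 Y)).symm.toEquiv.subsingleton
  have hexact := (HomologicalComplex.exactAt_iff_isZero_homology _ 1).2
    (ModuleCat.isZero_of_subsingleton ((P.complex.linearYonedaObj ℤ Y).homology 1))
  rw [HomologicalComplex.exactAt_iff' _ 0 1 2 (by simp) (by simp),
    ShortComplex.moduleCat_exact_iff] at hexact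
  exact hexact g hg

lemma CategoryTheory.ProjectiveResolution.exists_extension_of_subsingleton_ext {A : Type u}
    [Ring A] {T E : ModuleCat.{u} A} (P : ProjectiveResolution T)
    (hext : Subsingleton (((Ext ℤ (ModuleCat.{u} A) 1).obj (op T)).obj E))
    (g : LinearMap.ker (P.π.f 0).hom →ₗ[A] E) :
    ∃ h : P.complex.X 0 →ₗ[A] E, ∀ p : LinearMap.ker (P.π.f 0).hom, h p = g p := by
  have hεd : ∀ w, (P.π.f 0).hom ((P.complex.d 1 0).hom w) = 0 := fun w =>
    congrArg (fun f => f.hom w) P.complex_d_comp_π_f_zero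
  let d₁ := LinearMap.codRestrict (LinearMap.ker (P.π.f 0).hom) (P.complex.d 1 0).hom hεd
  obtain ⟨h, hh⟩ := P.exists_d_comp_eq_of_subsingleton_ext hext (ModuleCat.ofHom (g ∘ₗ d₁)) <| by
    ext w
    have : d₁ ((P.complex.d 2 1).hom w) = 0 :=
      Subtype.ext (congrArg (fun f => f.hom w) (P.complex.d_comp_d 2 1 0))
    show g (d₁ ((P.complex.d 2 1).hom w)) = 0
    rw [this, map_zero]
  refine ⟨h.hom, fun ⟨p, hp⟩ => ?_⟩
  obtain ⟨w, rfl⟩ := (ShortComplex.moduleCat_exact_iff _).1 P.exact₀ p hp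
  exact congrArg (fun f => f.hom w) hh

theorem Ideal.exists_extension_of_subsingleton_ext {A : Type u} [Ring A] {E : Type u}
    [AddCommGroup E] [Module A E] (I : Ideal A)
    (hext : Subsingleton (((Ext ℤ (ModuleCat.{u} A) 1).obj
      (op (ModuleCat.of A (A ⧸ I)))).obj (ModuleCat.of A E)))
    (γ : I →ₗ[A] E) : ∃ H : A →ₗ[A] E, ∀ x : I, H x = γ x := by
  let P := ProjectiveResolution.of (ModuleCat.of A (A ⧸ I))
  let π₀ : P.complex.X 0 ⟶ ModuleCat.of A (A ⧸ I) := P.π.f 0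
  have : Epi π₀ := inferInstanceAs (Epi (P.π.f 0))
  have : Epi (ModuleCat.ofHom I.mkQ) := (ModuleCat.epi_iff_surjective _).2 I.mkQ_surjective
  -- `u` lifts the augmentation `π₀` along `A → A ⧸ I`, so it maps `ker π₀` into `I`
  let u := (Projective.factorThru π₀ (ModuleCat.ofHom I.mkQ)).hom
  have hu : ∀ p, I.mkQ (u p) = π₀.hom p := fun p =>
    congrArg (fun f => f.hom p) (Projective.factorThru_comp π₀ (ModuleCat.ofHom I.mkQ))
  have hu_mem : ∀ p, π₀.hom p = 0 → u p ∈ I := fun p hp => by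
    rw [← Submodule.Quotient.mk_eq_zero, ← Submodule.mkQ_apply, hu, hp]
  obtain ⟨h, hh⟩ := P.exists_extension_of_subsingleton_ext hext
    (γ ∘ₗ LinearMap.codRestrict I (u ∘ₗ (LinearMap.ker π₀.hom).subtype) fun p => hu_mem p p.2)
  obtain ⟨p₀, hp₀⟩ := (ModuleCat.epi_iff_surjective π₀).1 inferInstance (I.mkQ 1)
  have hp₀_mem : 1 - u p₀ ∈ I := by
    rw [← Submodule.Quotient.mk_eq_zero, ← Submodule.mkQ_apply, map_sub, hu, hp₀, sub_self]
  -- on `x ∈ I` the correction `h (x • p₀)` equals `γ (x • u p₀)`, as `x • p₀ ∈ ker π₀`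
  refine ⟨LinearMap.toSpanSingleton A E (γ ⟨1 - u p₀, hp₀_mem⟩ + h p₀), fun x => ?_⟩
  have hxp₀ : π₀.hom ((x : A) • p₀) = 0 := by
    rw [map_smul, hp₀, ← map_smul, smul_eq_mul, mul_one, Submodule.mkQ_apply,
      Submodule.Quotient.mk_eq_zero]
    exact x.2
  rw [LinearMap.toSpanSingleton_apply, smul_add, ← map_smul, ← map_smul, hh ⟨_, hxp₀⟩,
    LinearMap.comp_apply, ← map_add]
  congr 1
  ext
  show (x : A) * (1 - u p₀) + u ((x : A) • p₀) = x
  rw [map_smul, smul_eq_mul, mul_sub, mul_one, sub_add_cancel]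

lemma IsFinitelyPresentableMod.of_linearEquiv {A M M' : Type u} [Ring A] [AddCommGroup M]
    [Module A M] [AddCommGroup M'] [Module A M'] (h : IsFinitelyPresentableMod A M)
    (e : M ≃ₗ[A] M') : IsFinitelyPresentableMod A M' := by
  obtain ⟨k, l, f, ⟨g⟩⟩ := h
  exact ⟨k, l, f, ⟨e.symm.trans g⟩⟩

lemma isFinitelyPresentableMod_quotient {A : Type u} [Ring A] {I : Ideal A} (hI : I.FG) :
    IsFinitelyPresentableMod A (A ⧸ I) := by
  obtain ⟨k, b, hb⟩ := Submodule.fg_iff_exists_fin_generating_family.1 hI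
  let u := Finsupp.uniqueLinearEquiv A A (0 : Fin 1)
  let d : (Fin k →₀ A) →ₗ[A] (Fin 1 →₀ A) := u.symm.toLinearMap ∘ₗ Finsupp.linearCombination A b
  have hmap : (LinearMap.range d).map u.toLinearMap = I := by
    rw [← LinearMap.range_comp, ← hb, ← Finsupp.range_linearCombination]
    congr 1
    ext
    simp [d]
  exact ⟨k, 1, d, ⟨(Submodule.Quotient.equiv (LinearMap.range d) I u hmap).symm⟩⟩

lemma isFinitelyPresentableMod_ideal {S : Type u} [Ring S]
    (hcoh : ∀ I : Submodule Sᵐᵒᵖ S, I.FG → IsFinitelyPresentableMod Sᵐᵒᵖ I)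
    {I : Ideal Sᵐᵒᵖ} (hI : I.FG) : IsFinitelyPresentableMod Sᵐᵒᵖ I :=
  let e : S ≃ₗ[Sᵐᵒᵖ] Sᵐᵒᵖ := MulOpposite.opLinearEquiv Sᵐᵒᵖ
  (hcoh _ (Submodule.FG.map e.symm.toLinearMap hI)).of_linearEquiv (e.symm.submoduleMap I).symm

namespace NCT

section Tensor

variable {R : Type u} [Ring R]
variable {M M' N : Type u} [AddCommGroup M] [Module Rᵐᵒᵖ M] [AddCommGroup M'] [Module Rᵐᵒᵖ M']
  [AddCommGroup N] [Module R N]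

@[elab_as_elim]
lemma Tens.induction_on {P : Tens R M N → Prop} (x : Tens R M N) (zero : P 0)
    (tmul : ∀ m n, P (mk (m ⊗ₜ[ℤ] n))) (add : ∀ x y, P x → P y → P (x + y)) : P x := by
  obtain ⟨t, rfl⟩ := mk_surjective x
  induction t using TensorProduct.induction_on with
  | zero => rwa [map_zero]
  | tmul m n => exact tmul m n
  | add a b ha hb => rw [map_add]; exact add _ _ ha hb

lemma Tens.addHom_ext {A : Type*} [AddCommGroup A] {φ ψ : Tens R M N →+ A}
    (h : ∀ m n, φ (mk (m ⊗ₜ[ℤ] n)) = ψ (mk (m ⊗ₜ[ℤ] n))) : φ = ψ := by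
  ext x
  induction x using Tens.induction_on with
  | zero => simp only [map_zero]
  | tmul m n => exact h m n
  | add x y hx hy => simp only [map_add, hx, hy]

lemma mk_op_smul_tmul (r : R) (m : M) (n : N) :
    (mk ((MulOpposite.op r • m) ⊗ₜ[ℤ] n) : Tens R M N) = mk (m ⊗ₜ[ℤ] (r • n)) := by
  rw [← sub_eq_zero, ← map_sub]
  exact (QuotientAddGroup.eq_zero_iff _).mpr (AddSubgroup.subset_closure ⟨r, m, n, rfl⟩)

lemma tmap_mk_tmul (f : M →ₗ[Rᵐᵒᵖ] M') (m : M) (n : N) :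
    tmap f (LinearMap.id : N →ₗ[R] N) (mk (m ⊗ₜ[ℤ] n)) = mk (f m ⊗ₜ[ℤ] n) := rfl

lemma tmap_surjective {f : M →ₗ[Rᵐᵒᵖ] M'} (hf : Function.Surjective f) :
    Function.Surjective (tmap f (LinearMap.id : N →ₗ[R] N)) := by
  intro x
  induction x using Tens.induction_on with
  | zero => exact ⟨0, map_zero _⟩
  | tmul m n =>
    obtain ⟨m, rfl⟩ := hf m
    exact ⟨mk (m ⊗ₜ n), tmap_mk_tmul f m n⟩
  | add x y hx hy =>
    obtain ⟨x, rfl⟩ := hx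
    obtain ⟨y, rfl⟩ := hy
    exact ⟨x + y, map_add _ x y⟩

def liftTens {A : Type*} [AddCommGroup A] (B : M →+ N →+ A)
    (hB : ∀ (r : R) (m : M) (n : N), B (MulOpposite.op r • m) n = B m (r • n)) :
    Tens R M N →+ A :=
  QuotientAddGroup.lift _ (TensorProduct.liftAddHom B fun z m n => by
      rw [map_zsmul, AddMonoidHom.smul_apply, map_zsmul]) <| by
    rw [rel, AddSubgroup.closure_le]
    rintro _ ⟨r, m, n, rfl⟩
    simp [hB]

end Tensor

section Character

variable {S : Type u} [Ring S] {N : Type u} [AddCommGroup N] [Module S N]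

/-- `(c • χ) n = χ (c.unop • n)`, the action of `Sᵈᵐᵃ = Sᵐᵒᵖ` on the domain. -/
instance : Module Sᵐᵒᵖ (CharacterModule N) :=
  inferInstanceAs (Module Sᵈᵐᵃ (N →+ AddCircle (1 : ℚ)))

variable {M M' : Type u} [AddCommGroup M] [Module Sᵐᵒᵖ M] [AddCommGroup M'] [Module Sᵐᵒᵖ M']

def characterUncurry (g : M →ₗ[Sᵐᵒᵖ] CharacterModule N) : CharacterModule (Tens S M N) :=
  liftTens (AddMonoidHom.mk' (fun m => g m) fun m m' => by rw [map_add]; rfl) fun r m n => by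
    show g (MulOpposite.op r • m) n = g m (r • n)
    rw [map_smul]
    rfl

def characterCurry (χ : CharacterModule (Tens S M N)) : M →ₗ[Sᵐᵒᵖ] CharacterModule N where
  toFun m := (χ.comp mk).comp (TensorProduct.mk ℤ M N m).toAddMonoidHom
  map_add' m m' := by
    ext n
    show χ (mk ((m + m') ⊗ₜ n)) = χ (mk (m ⊗ₜ n)) + χ (mk (m' ⊗ₜ n))
    rw [TensorProduct.add_tmul, map_add, map_add]
  map_smul' c m := by
    ext n
    show χ (mk ((c • m) ⊗ₜ n)) = χ (mk (m ⊗ₜ (c.unop • n)))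
    rw [← mk_op_smul_tmul, MulOpposite.op_unop]

lemma characterUncurry_characterCurry (χ : CharacterModule (Tens S M N)) :
    characterUncurry (characterCurry χ) = χ :=
  Tens.addHom_ext fun _ _ => rfl

lemma characterUncurry_comp_tmap (f : M →ₗ[Sᵐᵒᵖ] M') (g : M' →ₗ[Sᵐᵒᵖ] CharacterModule N) :
    (characterUncurry g).comp (tmap f LinearMap.id) = characterUncurry (g ∘ₗ f) :=
  Tens.addHom_ext fun _ _ => rfl

theorem flatLeft_of_injective_characterModule
    (hN : Module.Injective Sᵐᵒᵖ (CharacterModule N)) : FlatLeft S N := by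
  intro M M' _ _ _ _ f hf
  rw [injective_iff_map_eq_zero]
  intro x hx
  by_contra hne
  obtain ⟨χ, hχ⟩ := CharacterModule.exists_character_apply_ne_zero_of_ne_zero hne
  obtain ⟨g, hg⟩ := Module.Injective.extension_property Sᵐᵒᵖ _ _ _ f hf (characterCurry χ)
  apply hχ
  rw [← characterUncurry_characterCurry χ, ← hg, ← characterUncurry_comp_tmap]
  exact (congrArg (characterUncurry g) hx).trans (map_zero _)

theorem baer_characterModule
    (h : ∀ I : Ideal Sᵐᵒᵖ, Function.Injective (tmap I.subtype (LinearMap.id : N →ₗ[S] N))) :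
    Module.Baer Sᵐᵒᵖ (CharacterModule N) := by
  intro I g
  obtain ⟨χ, hχ⟩ := CharacterModule.dual_surjective_of_injective
    (tmap I.subtype (LinearMap.id : N →ₗ[S] N)).toIntLinearMap (h I) (characterUncurry g)
  refine ⟨characterCurry χ, fun x hx => ?_⟩
  ext n
  exact DFunLike.congr_fun hχ (mk ((⟨x, hx⟩ : I) ⊗ₜ[ℤ] n))

end Character

section FGIdeals

variable {S : Type u} [Ring S] {N : Type u} [AddCommGroup N] [Module S N]

lemma exists_fg_tmap_inclusion_eq {M : Type u} [AddCommGroup M] [Module Sᵐᵒᵖ M]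
    (P : Submodule Sᵐᵒᵖ M) (x : Tens S P N) :
    ∃ (P₀ : Submodule Sᵐᵒᵖ M) (hle : P₀ ≤ P) (x₀ : Tens S P₀ N),
      P₀.FG ∧ tmap (Submodule.inclusion hle) LinearMap.id x₀ = x := by
  induction x using Tens.induction_on with
  | zero => exact ⟨⊥, bot_le, 0, Submodule.fg_bot, map_zero _⟩
  | tmul a n =>
    refine ⟨Submodule.span Sᵐᵒᵖ {(a : M)}, (Submodule.span_singleton_le_iff_mem _ _).mpr a.2,
      mk (⟨a, Submodule.mem_span_singleton_self _⟩ ⊗ₜ n), Submodule.fg_span_singleton _, rfl⟩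
  | add x y hx hy =>
    obtain ⟨P₁, hle₁, x₁, hfg₁, rfl⟩ := hx
    obtain ⟨P₂, hle₂, x₂, hfg₂, rfl⟩ := hy
    refine ⟨P₁ ⊔ P₂, sup_le hle₁ hle₂,
      tmap (Submodule.inclusion le_sup_left) LinearMap.id x₁ +
        tmap (Submodule.inclusion le_sup_right) LinearMap.id x₂, hfg₁.sup hfg₂, ?_⟩
    rw [map_add, tmap_tmap, tmap_tmap]
    rfl

lemma tmap_subtype_injective_of_fg
    (hfg : ∀ I : Ideal Sᵐᵒᵖ, I.FG →
      Function.Injective (tmap I.subtype (LinearMap.id : N →ₗ[S] N)))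
    (I : Ideal Sᵐᵒᵖ) : Function.Injective (tmap I.subtype (LinearMap.id : N →ₗ[S] N)) := by
  rw [injective_iff_map_eq_zero]
  intro x hx
  obtain ⟨I₀, hle, x₀, hI₀, rfl⟩ := exists_fg_tmap_inclusion_eq I x
  rw [tmap_tmap, LinearMap.id_comp, Submodule.subtype_comp_inclusion] at hx
  rw [(injective_iff_map_eq_zero _).mp (hfg I₀ hI₀) x₀ hx, map_zero]

theorem flatLeft_of_fg_ideals
    (hfg : ∀ I : Ideal Sᵐᵒᵖ, I.FG →
      Function.Injective (tmap I.subtype (LinearMap.id : N →ₗ[S] N))) :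
    FlatLeft S N :=
  flatLeft_of_injective_characterModule <|
    (baer_characterModule (tmap_subtype_injective_of_fg hfg)).injective

end FGIdeals

section FreeModule

variable {S : Type u} [Ring S] {N : Type u} [AddCommGroup N] [Module S N] {k l : ℕ}

def sumSingleTmul (φ : Fin l → N) : Tens S (Fin l →₀ Sᵐᵒᵖ) N :=
  ∑ i, mk (Finsupp.single i 1 ⊗ₜ φ i)

lemma mk_tmul_eq_sumSingleTmul (v : Fin l →₀ Sᵐᵒᵖ) (n : N) :
    (mk (v ⊗ₜ[ℤ] n) : Tens S (Fin l →₀ Sᵐᵒᵖ) N) = sumSingleTmul fun i => (v i).unop • n := by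
  conv_lhs => rw [← Finsupp.univ_sum_single v]
  rw [TensorProduct.sum_tmul, map_sum]
  refine Finset.sum_congr rfl fun i _ => ?_
  rw [← mk_op_smul_tmul, MulOpposite.op_unop, Finsupp.smul_single, smul_eq_mul, mul_one]

lemma sumSingleTmul_surjective :
    Function.Surjective (sumSingleTmul : (Fin l → N) → Tens S (Fin l →₀ Sᵐᵒᵖ) N) := by
  intro x
  induction x using Tens.induction_on with
  | zero => exact ⟨0, by simp [sumSingleTmul]⟩
  | tmul v n => exact ⟨_, (mk_tmul_eq_sumSingleTmul v n).symm⟩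
  | add x y hx hy =>
    obtain ⟨φ, rfl⟩ := hx
    obtain ⟨ψ, rfl⟩ := hy
    exact ⟨φ + ψ, by simp [sumSingleTmul, TensorProduct.tmul_add, Finset.sum_add_distrib]⟩

lemma tmap_sumSingleTmul (d : (Fin k →₀ Sᵐᵒᵖ) →ₗ[Sᵐᵒᵖ] (Fin l →₀ Sᵐᵒᵖ)) (ψ : Fin k → N) :
    tmap d LinearMap.id (sumSingleTmul ψ) =
      sumSingleTmul fun i => ∑ j, (d (Finsupp.single j 1) i).unop • ψ j := by
  rw [sumSingleTmul, map_sum]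
  simp_rw [tmap_mk_tmul, mk_tmul_eq_sumSingleTmul]
  simp only [sumSingleTmul, TensorProduct.tmul_sum, map_sum]
  exact Finset.sum_comm

end FreeModule

section HomPairing

variable {R S : Type u} [Ring R] [Ring S]
variable {E : Type u} [AddCommGroup E] [Module R E] [Module Sᵐᵒᵖ E] [SMulCommClass R Sᵐᵒᵖ E]
variable {J : Type u} [AddCommGroup J] [Module R J]
variable {M N : Type u} [AddCommGroup M] [Module Sᵐᵒᵖ M] [AddCommGroup N] [Module Sᵐᵒᵖ N]

@[simp] lemma homLeftModule_smul_apply (s : S) (f : E →ₗ[R] J) (e : E) :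
    (s • f) e = f (MulOpposite.op s • e) := rfl

def homPairing (g : M →ₗ[Sᵐᵒᵖ] E) : Tens S M (E →ₗ[R] J) →+ J :=
  liftTens (AddMonoidHom.mk' (fun m => AddMonoidHom.mk' (fun f : E →ₗ[R] J => f (g m))
      fun _ _ => rfl) fun m m' => by ext f; simp) fun s m f => by
    simp

lemma homPairing_tmap (f : M →ₗ[Sᵐᵒᵖ] N) (g : N →ₗ[Sᵐᵒᵖ] E) (x : Tens S M (E →ₗ[R] J)) :
    homPairing g (tmap f LinearMap.id x) = homPairing (g ∘ₗ f) x :=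
  DFunLike.congr_fun (Tens.addHom_ext (φ := (homPairing g).comp (tmap f LinearMap.id))
    (ψ := homPairing (g ∘ₗ f)) fun _ _ => rfl) x

lemma homPairing_sumSingleTmul {l : ℕ} (g : (Fin l →₀ Sᵐᵒᵖ) →ₗ[Sᵐᵒᵖ] E)
    (φ : Fin l → E →ₗ[R] J) :
    homPairing g (sumSingleTmul φ) = ∑ i, φ i (g (Finsupp.single i 1)) := by
  simp only [sumSingleTmul, map_sum]
  rfl

variable (R) in
/-- Precomposition with `d`, read through `Hom(Sᵐᵒᵖ^l, E) ≅ E^l`. -/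
def precompCoords {k l : ℕ} (d : (Fin k →₀ Sᵐᵒᵖ) →ₗ[Sᵐᵒᵖ] (Fin l →₀ Sᵐᵒᵖ)) :
    (Fin l → E) →ₗ[R] (Fin k → E) where
  toFun e j := Finsupp.linearCombination Sᵐᵒᵖ e (d (Finsupp.single j 1))
  map_add' e e' := by ext j; simp [Finsupp.linearCombination_apply, Finsupp.sum_add]
  map_smul' r e := by
    ext j
    simp [Finsupp.linearCombination_apply, Finsupp.smul_sum, smul_comm r]

lemma linearCombination_comp_eq_zero {k l : ℕ}
    {d : (Fin k →₀ Sᵐᵒᵖ) →ₗ[Sᵐᵒᵖ] (Fin l →₀ Sᵐᵒᵖ)} {e : Fin l → E}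
    (he : precompCoords R d e = 0) : Finsupp.linearCombination Sᵐᵒᵖ e ∘ₗ d = 0 :=
  Finsupp.lhom_ext' fun j => LinearMap.ext_ring (congrFun he j)

lemma lsum_comp_precompCoords {k l : ℕ} (d : (Fin k →₀ Sᵐᵒᵖ) →ₗ[Sᵐᵒᵖ] (Fin l →₀ Sᵐᵒᵖ))
    (ψ : Fin k → E →ₗ[R] J) :
    LinearMap.lsum R (fun _ => E) ℕ ψ ∘ₗ precompCoords R d =
      LinearMap.lsum R (fun _ => E) ℕ fun i => ∑ j, (d (Finsupp.single j 1) i).unop • ψ j := by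
  ext e
  simp [precompCoords, Finsupp.linearCombination_apply, Finsupp.sum_fintype]
  exact Finset.sum_comm

theorem eq_zero_of_forall_homPairing_eq_zero [Module.Injective R J]
    (hN : IsFinitelyPresentableMod Sᵐᵒᵖ N) {x : Tens S N (E →ₗ[R] J)}
    (hx : ∀ g : N →ₗ[Sᵐᵒᵖ] E, homPairing g x = 0) : x = 0 := by
  obtain ⟨k, l, d, ⟨eN⟩⟩ := hN
  set π : (Fin l →₀ Sᵐᵒᵖ) →ₗ[Sᵐᵒᵖ] N := eN.symm.toLinearMap ∘ₗ (LinearMap.range d).mkQ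
  have hπd : π ∘ₗ d = 0 := by
    ext j
    simp [π]
  obtain ⟨y, rfl⟩ := tmap_surjective (N := E →ₗ[R] J) (f := π)
    (eN.symm.surjective.comp (Submodule.mkQ_surjective _)) x
  obtain ⟨φ, rfl⟩ := sumSingleTmul_surjective y
  -- maps `N → E` are the tuples in `ker (precompCoords R d)`, on which `∑ φᵢ (eᵢ)` vanishes
  -- by `hx`; factoring it through `precompCoords R d` exhibits `φ` as `dᵀ ψ` for some `ψ`
  have hker : LinearMap.ker (precompCoords R d) ≤
      LinearMap.ker (LinearMap.lsum R (fun _ => E) ℕ φ) := by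
    intro e he
    have hd : LinearMap.range d ≤ LinearMap.ker (Finsupp.linearCombination Sᵐᵒᵖ e) := by
      rintro _ ⟨v, rfl⟩
      exact LinearMap.congr_fun (linearCombination_comp_eq_zero he) v
    have := hx ((LinearMap.range d).liftQ _ hd ∘ₗ eN.toLinearMap)
    rw [homPairing_tmap, homPairing_sumSingleTmul] at this
    simpa [π] using this
  obtain ⟨γ, hγ⟩ := Module.Injective.exists_comp_eq_of_ker_le hker
  set ψ := (LinearMap.lsum R (fun _ => E) ℕ).symm γ
  have hφ : φ = fun i => ∑ j, (d (Finsupp.single j 1) i).unop • ψ j := by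
    apply (LinearMap.lsum R (fun _ => E) ℕ).injective
    rw [← lsum_comp_precompCoords, LinearEquiv.apply_symm_apply, hγ]
  rw [hφ, ← tmap_sumSingleTmul, tmap_tmap, LinearMap.id_comp, hπd, tmap_zero_left]
  rfl

theorem tmap_subtype_injective_of_forall_extension [Module.Injective R J] {I : Ideal Sᵐᵒᵖ}
    (hI : IsFinitelyPresentableMod Sᵐᵒᵖ I)
    (hE : ∀ γ : I →ₗ[Sᵐᵒᵖ] E, ∃ H : Sᵐᵒᵖ →ₗ[Sᵐᵒᵖ] E, ∀ x : I, H x = γ x) :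
    Function.Injective (tmap I.subtype (LinearMap.id : (E →ₗ[R] J) →ₗ[S] (E →ₗ[R] J))) := by
  rw [injective_iff_map_eq_zero]
  intro x hx
  refine eq_zero_of_forall_homPairing_eq_zero hI fun γ => ?_
  obtain ⟨H, hH⟩ := hE γ
  rw [show γ = H ∘ₗ I.subtype from LinearMap.ext fun x => (hH x).symm, ← homPairing_tmap, hx,
    map_zero]

end HomPairing

end NCT

/-- **Hom from an fp-injective bimodule into an injective module is flat.**
Let `R` be a ring, `S` a right coherent ring (every finitely generated right ideal of `S`
is finitely presentable), `E` an `R`-`S`-bimodule which is fp-injective as a right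
`S`-module (i.e. `Ext¹_S(T, E) = 0` for every finitely presentable right `S`-module `T`),
and `J` an injective left `R`-module.  Then the left `S`-module `Hom_R(E, J)` is flat. -/
theorem hom_flat_of_fp_injective_of_injective
    (R : Type u) [Ring R] (S : Type u) [Ring S]
    (hcoh : ∀ I : Submodule Sᵐᵒᵖ S, I.FG → IsFinitelyPresentableMod Sᵐᵒᵖ I)
    (E : Type u) [AddCommGroup E] [Module R E] [Module Sᵐᵒᵖ E] [SMulCommClass R Sᵐᵒᵖ E]
    (hfpinj : ∀ T : ModuleCat.{u} Sᵐᵒᵖ, IsFinitelyPresentableMod Sᵐᵒᵖ T →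
      Subsingleton (((Ext ℤ (ModuleCat.{u} Sᵐᵒᵖ) 1).obj (op T)).obj (ModuleCat.of Sᵐᵒᵖ E)))
    (J : Type u) [AddCommGroup J] [Module R J] (hJ : Module.Injective R J) :
    NCT.FlatLeft S (E →ₗ[R] J) :=
  NCT.flatLeft_of_fg_ideals fun I hI =>
    NCT.tmap_subtype_injective_of_forall_extension (isFinitelyPresentableMod_ideal hcoh hI)
      (I.exists_extension_of_subsingleton_ext (hfpinj _ (isFinitelyPresentableMod_quotient hI)))
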